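/- arXiv:2107.04630 — 2 statements merged into one kernel-verified Lean document; each statement's English description precedes it below -/
import Mathlib

section
/- Let μ₁ be a measure on (0,∞) with μ₁([r,∞)) < ∞ for all r > 0, and let μ₂ be a probability measure on the non-negative unit sphere S of a norm on ℝ^d. Define μ(A) := (μ₁ ⊗ μ₂)({(m₁, m₂) : m₁·m₂ ∈ A}). Then μ satisfies μ({x ∈ [0,∞)^d : x_i > ε}) < ∞ for every coordinate i and every ε > 0, hence μ is an exponent measure of a max-id random vector. -/
/-! The coordinate functionals are bounded with respect to any norm on `ℝ^d` (all norms on a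
finite-dimensional space are equivalent), so on the support of `μ₂` every coordinate is at most
some `C`. Hence `m₁ • m₂` can only have `i`-th coordinate above `ε` when `m₁ ≥ ε / C`, and
`μ {x | ε < x i} ≤ μ₁ [ε / C, ∞) · μ₂(S) < ∞`. -/

open MeasureTheory Set
open scoped ENNReal

lemma LinearMap.exists_pos_abs_le_mul_of_norm_axioms {E : Type*} [AddCommGroup E] [Module ℝ E]
    [FiniteDimensional ℝ E] (nrm : E → ℝ) (hdef : ∀ x, nrm x = 0 ↔ x = 0)
    (hhom : ∀ (c : ℝ) (x), nrm (c • x) = |c| * nrm x)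
    (htri : ∀ x y, nrm (x + y) ≤ nrm x + nrm y) (f : E →ₗ[ℝ] ℝ) :
    ∃ C : ℝ, 0 < C ∧ ∀ x, |f x| ≤ C * nrm x := by
  let n : AddGroupNorm E :=
    { toFun := nrm
      map_zero' := by simpa using hhom 0 0
      add_le' := htri
      neg' := fun x => by simpa using hhom (-1) x
      eq_zero_of_map_eq_zero' := fun x hx => (hdef x).1 hx }
  let : NormedAddCommGroup E := n.toNormedAddCommGroup
  let : NormedSpace ℝ E := { norm_smul_le := fun c x => (hhom c x).le }
  let g : E →L[ℝ] ℝ := ⟨f, f.continuous_of_finiteDimensional⟩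
  refine ⟨max ‖g‖ 1, lt_max_of_lt_right one_pos, fun x => ?_⟩
  calc |f x| = ‖g x‖ := rfl
    _ ≤ ‖g‖ * ‖x‖ := g.le_opNorm x
    _ ≤ max ‖g‖ 1 * nrm x := mul_le_mul_of_nonneg_right (le_max_left _ _) (norm_nonneg x)

lemma map_smul_prod_coord_gt_le {ι : Type*} [Countable ι] (μ₁ : Measure ℝ)
    (μ₂ : Measure (ι → ℝ)) {i : ι} {C ε : ℝ} (hε : 0 ≤ ε) (hμ₂ : ∀ᵐ x ∂μ₂, 0 ≤ x i ∧ x i ≤ C) :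
    (μ₁.prod μ₂).map (fun p => p.1 • p.2) {x | ε < x i} ≤ μ₁ (Ici (ε / C)) * μ₂ univ := by
  have hsmul : Measurable fun p : ℝ × (ι → ℝ) => p.1 • p.2 := measurable_fst.smul measurable_snd
  rw [Measure.map_apply hsmul (measurableSet_lt measurable_const (measurable_pi_apply i))]
  refine le_trans (measure_mono_ae ?_) (Measure.prod_prod_le _ _)
  filter_upwards [Measure.quasiMeasurePreserving_snd.ae hμ₂] with ⟨m, x⟩ ⟨hx0, hxC⟩ hmx
  dsimp only at hx0 hxC
  change ε < m * x i at hmx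
  have hxi : 0 < x i := hx0.lt_of_ne fun h => by rw [← h, mul_zero] at hmx; linarith
  refine ⟨?_, mem_univ x⟩
  calc ε / C ≤ ε / x i := div_le_div_of_nonneg_left hε hxi hxC
    _ ≤ m := (div_le_iff₀ hxi).2 hmx.le

theorem stmt9_general {d : ℕ} (μ₁ : Measure ℝ)
    (hμ₁fin : ∀ r : ℝ, 0 < r → μ₁ (Set.Ici r) < ⊤)
    (nrm : (Fin d → ℝ) → ℝ)
    (hdef : ∀ x, nrm x = 0 ↔ x = 0)
    (hhom : ∀ (c : ℝ) (x), nrm (c • x) = |c| * nrm x)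
    (htri : ∀ x y, nrm (x + y) ≤ nrm x + nrm y)
    (μ₂ : Measure (Fin d → ℝ)) [IsProbabilityMeasure μ₂]
    (hμ₂supp : μ₂ {x | nrm x = 1 ∧ ∀ i, 0 ≤ x i}ᶜ = 0)
    (μ : Measure (Fin d → ℝ))
    (hμ : μ = Measure.map (fun p : ℝ × (Fin d → ℝ) => p.1 • p.2) (μ₁.prod μ₂)) :
    ∀ (i : Fin d) (ε : ℝ), 0 < ε → μ {x | ε < x i} < ⊤ := by
  intro i ε hε
  obtain ⟨C, hC, hCb⟩ :=
    (LinearMap.proj i : (Fin d → ℝ) →ₗ[ℝ] ℝ).exists_pos_abs_le_mul_of_norm_axioms nrm hdef hhom htri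
  have hcoord : ∀ᵐ x ∂μ₂, 0 ≤ x i ∧ x i ≤ C := by
    filter_upwards [measure_eq_zero_iff_ae_notMem.1 hμ₂supp] with x hx
    obtain ⟨hx1, hx0⟩ : nrm x = 1 ∧ ∀ i, 0 ≤ x i := not_not.1 hx
    have hxC : |x i| ≤ C := by simpa [hx1] using hCb x
    exact ⟨hx0 i, (abs_le.1 hxC).2⟩
  subst hμ
  calc _ ≤ μ₁ (Ici (ε / C)) * μ₂ univ := map_smul_prod_coord_gt_le μ₁ μ₂ hε.le hcoord
    _ < ⊤ := by
      rw [measure_univ, mul_one]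
      exact hμ₁fin _ (div_pos hε hC)

theorem stmt9 {d : ℕ} (μ₁ : Measure ℝ) [SigmaFinite μ₁]
    (hμ₁supp : μ₁ {s | s ≤ 0} = 0)
    (hμ₁fin : ∀ r : ℝ, 0 < r → μ₁ (Set.Ici r) < ⊤)
    (nrm : (Fin d → ℝ) → ℝ)
    (hnn : ∀ x, 0 ≤ nrm x) (hdef : ∀ x, nrm x = 0 ↔ x = 0)
    (hhom : ∀ (c : ℝ) (x), nrm (c • x) = |c| * nrm x)
    (htri : ∀ x y, nrm (x + y) ≤ nrm x + nrm y)
    (μ₂ : Measure (Fin d → ℝ)) [IsProbabilityMeasure μ₂]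
    (hμ₂supp : μ₂ {x | nrm x = 1 ∧ ∀ i, 0 ≤ x i}ᶜ = 0)
    (μ : Measure (Fin d → ℝ))
    (hμ : μ = Measure.map (fun p : ℝ × (Fin d → ℝ) => p.1 • p.2) (μ₁.prod μ₂)) :
    ∀ (i : Fin d) (ε : ℝ), 0 < ε → μ {x | ε < x i} < ⊤ :=
  stmt9_general μ₁ hμ₁fin nrm hdef hhom htri μ₂ hμ₂supp μ hμ
end

section
/- Let H be a non-negative non-decreasing càdlàg infinitely divisible process with H_0 = 0, Lévy measure ν on the space M of non-zero non-negative non-decreasing càdlàg functions vanishing at 0, and zero drift, so that E[exp(−Σ_{i=1}^d a_i H_{t_i})] = exp(−∫_M (1 − exp(−Σ_{i=1}^d a_i g(t_i))) dν(g)). Then the sequence X := 1 / (inf{t : H_t ≥ E_i})_{i∈ℕ} with (E_i) i.i.d. Exp(1) independent of H satisfies, for all d and all x ∈ (0,∞)^d: P(X_1 < x_1, ..., X_d < x_d) = exp(−∫_M (1 − Π_{i=1}^d exp(−g(1/x_i))) dν(g)), i.e. its exponent measure is μ(A) = ∫_M P_{⊗(1−exp(−g(·)))}(1/A) dν(g).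 -/
open MeasureTheory ProbabilityTheory
open scoped ENNReal

/-!
For a right-continuous non-decreasing path started at 0, the first passage time above a level
`e > 0` exceeds `t` exactly when the path is still below `e` at time `t`. Hence
`{X_i < x_i, i < d} = {H(1/x_i) < E_i, i < d}` almost surely. Conditioning on `H`, the
independent unit exponentials give `P(H(1/x_i) < E_i, i < d | H) = exp(-∑ H(1/x_i))`, whose
expectation is the Laplace functional of `H` at weights `a_i = 1`.
-/

open Filter Set Topology

theorem le_apply_csInf_of_continuousWithinAt {α β : Type*} [ConditionallyCompleteLinearOrder α]
    [TopologicalSpace α] [OrderTopology α] [DenselyOrdered α] [NoMaxOrder α]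
    [Preorder β] [TopologicalSpace β] [ClosedIciTopology β] {h : α → β} (hmono : Monotone h)
    {S : Set α} (hS : S.Nonempty)
    (hrc : ContinuousWithinAt h (Ici (sInf S)) (sInf S)) {e : β} (he : ∀ s ∈ S, e ≤ h s) :
    e ≤ h (sInf S) := by
  have habove : ∀ᶠ s in 𝓝[>] sInf S, e ≤ h s := by
    filter_upwards [self_mem_nhdsWithin] with s hs
    obtain ⟨s', hs'S, hs's⟩ := exists_lt_of_csInf_lt hS hs
    exact (he s' hs'S).trans (hmono hs's.le)
  exact ge_of_tendsto ((hrc.mono Ioi_subset_Ici_self).tendsto) habove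

theorem inv_sInf_setOf_le_lt_iff {h : ℝ → ℝ} (h0 : h 0 = 0) (hmono : Monotone h)
    (hrc : ∀ s, ContinuousWithinAt h (Ici s) s) {e x : ℝ} (he : 0 < e) (hx : 0 < x) :
    (sInf {s | 0 ≤ s ∧ e ≤ h s})⁻¹ < x ↔ h x⁻¹ < e := by
  set S := {s | 0 ≤ s ∧ e ≤ h s}
  by_cases hS : S.Nonempty
  · have hbdd : BddBelow S := ⟨0, fun s hs => hs.1⟩
    have hτ : e ≤ h (sInf S) :=
      le_apply_csInf_of_continuousWithinAt hmono hS (hrc _) fun s hs => hs.2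
    have hτpos : 0 < sInf S := by
      refine (le_csInf hS fun s hs => hs.1).lt_of_ne ?_
      rintro hτ0
      rw [← hτ0, h0] at hτ
      linarith
    rw [inv_lt_comm₀ hτpos hx, ← not_le, ← not_le]
    exact not_congr ⟨fun hle => hτ.trans (hmono hle),
      fun hle => csInf_le hbdd ⟨(inv_pos.2 hx).le, hle⟩⟩
  · rw [not_nonempty_iff_eq_empty.1 hS, Real.sInf_empty, inv_zero]
    exact iff_of_true hx (not_le.1 fun hle => hS ⟨x⁻¹, (inv_pos.2 hx).le, hle⟩)

theorem ProbabilityTheory.IndepFun.measure_preimage_eq_lintegral {Ω α β : Type*}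
    [MeasurableSpace Ω] [MeasurableSpace α] [MeasurableSpace β] {P : Measure Ω} [IsFiniteMeasure P]
    {X : Ω → α} {Y : Ω → β} (hX : Measurable X) (hY : Measurable Y) (hXY : IndepFun X Y P)
    {S : Set (α × β)} (hS : MeasurableSet S) :
    P {ω | (X ω, Y ω) ∈ S} = ∫⁻ ω, P {ω' | (X ω', Y ω) ∈ S} ∂P := by
  have hlaw := (indepFun_iff_map_prod_eq_prod_map_map hX.aemeasurable hY.aemeasurable).1 hXY
  have hslice : Measurable fun y => P.map X ((fun x => (x, y)) ⁻¹' S) :=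
    measurable_measure_prodMk_right hS
  calc P {ω | (X ω, Y ω) ∈ S} = P.map (fun ω => (X ω, Y ω)) S :=
        (Measure.map_apply (hX.prodMk hY) hS).symm
    _ = ∫⁻ y, P.map X ((fun x => (x, y)) ⁻¹' S) ∂(P.map Y) := by
        rw [hlaw, Measure.prod_apply_symm hS]
    _ = ∫⁻ ω, P {ω' | (X ω', Y ω) ∈ S} ∂P := by
        rw [lintegral_map hslice hY]
        exact lintegral_congr fun ω => Measure.map_apply hX (measurable_prodMk_right hS)

theorem measure_forall_lt_of_iIndepFun_exp {Ω : Type*} [MeasurableSpace Ω] {P : Measure Ω}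
    {E : ℕ → Ω → ℝ} (hEindep : iIndepFun E P)
    (hEexp : ∀ (i : ℕ) (t : ℝ), P {ω | t < E i ω} = ENNReal.ofReal (Real.exp (-(max t 0))))
    {d : ℕ} {c : Fin d → ℝ} (hc : ∀ i, 0 ≤ c i) :
    P {ω | ∀ i : Fin d, c i < E i ω} = ENNReal.ofReal (Real.exp (-∑ i, c i)) := by
  have hindep := hEindep.precomp Fin.val_injective (g := fun i : Fin d => (i : ℕ))
  have hprod := hindep.measure_inter_preimage_eq_mul Finset.univ
    (sets := fun i => Ioi (c i)) fun i _ => measurableSet_Ioi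
  simp only [Finset.mem_univ, iInter_true] at hprod
  rw [show {ω | ∀ i : Fin d, c i < E i ω} = ⋂ i : Fin d, E i ⁻¹' Ioi (c i) by ext; simp, hprod,
    ← Finset.sum_neg_distrib, Real.exp_sum,
    ENNReal.ofReal_prod_of_nonneg fun i _ => (Real.exp_pos _).le]
  exact Finset.prod_congr rfl fun i _ =>
    (hEexp i (c i)).trans (by rw [max_eq_left (hc i)])

theorem stmt12_general {Ω : Type*} [MeasurableSpace Ω] (P : Measure Ω)
    [IsProbabilityMeasure P] (H : Ω → ℝ → ℝ) (hHmeas : Measurable H)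
    (hH0 : ∀ ω, H ω 0 = 0) (hHmono : ∀ ω, Monotone (H ω))
    (hHrc : ∀ ω t, ContinuousWithinAt (H ω) (Set.Ici t) t)
    -- the Lévy measure ν on the space M of non-zero nnnd paths vanishing at 0
    (ν : Measure (ℝ → ℝ))
    -- H is infinitely divisible with Lévy measure ν and zero drift
    (hLaplace : ∀ (n : ℕ) (a t : Fin n → ℝ), (∀ i, 0 ≤ a i) → (∀ i, 0 ≤ t i) →
      ∫⁻ ω, ENNReal.ofReal (Real.exp (-(∑ i, a i * H ω (t i)))) ∂P =
        ENNReal.ofReal (Real.exp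
          (-(∫⁻ g, ENNReal.ofReal
              (1 - Real.exp (-(∑ i, a i * g (t i)))) ∂ν).toReal)))
    (E : ℕ → Ω → ℝ) (hEmeas : ∀ i, Measurable (E i))
    (hEindep : iIndepFun E P)
    (hEexp : ∀ (i : ℕ) (t : ℝ),
      P {ω | t < E i ω} = ENNReal.ofReal (Real.exp (-(max t 0))))
    (hEH : IndepFun (fun ω (i : ℕ) => E i ω) H P)
    (Y X : ℕ → Ω → ℝ)
    (hY : ∀ i ω, Y i ω = sInf {t | 0 ≤ t ∧ E i ω ≤ H ω t})
    (hX : ∀ i ω, X i ω = (Y i ω)⁻¹) :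
    ∀ (d : ℕ) (x : Fin d → ℝ), (∀ i, 0 < x i) →
      P {ω | ∀ i : Fin d, X i ω < x i} =
        ENNReal.ofReal (Real.exp
          (-(∫⁻ g, ENNReal.ofReal
              (1 - ∏ i : Fin d, Real.exp (-g (1 / x i))) ∂ν).toReal)) := by
  intro d x hx
  have hxinv : ∀ i, 0 ≤ (x i)⁻¹ := fun i => (inv_pos.2 (hx i)).le
  have hHnn : ∀ ω i, 0 ≤ H ω (x i)⁻¹ := fun ω i => (hH0 ω).symm.le.trans (hHmono ω (hxinv i))
  have hEpos : ∀ᵐ ω ∂P, ∀ i : Fin d, 0 < E i ω := ae_all_iff.2 fun i =>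
    ae_iff.2 <| (prob_compl_eq_zero_iff (measurableSet_lt measurable_const (hEmeas i))).2
      (by simp [hEexp])
  set S : Set ((ℕ → ℝ) × (ℝ → ℝ)) := {p | ∀ i : Fin d, p.2 (x i)⁻¹ < p.1 i}
  have hS : MeasurableSet S := by
    simp only [S, ofPred_forall]
    exact MeasurableSet.iInter fun i => measurableSet_lt measurable_snd.eval measurable_fst.eval
  have hevent : {ω | ∀ i : Fin d, X i ω < x i} =ᵐ[P] {ω | ((fun i => E i ω), H ω) ∈ S} := by
    filter_upwards [hEpos] with ω hω
    refine propext <| forall_congr' fun i => ?_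
    rw [hX, hY]
    exact inv_sInf_setOf_le_lt_iff (hH0 ω) (hHmono ω) (hHrc ω) (hω i) (hx i)
  calc P {ω | ∀ i : Fin d, X i ω < x i}
      = P {ω | ((fun i => E i ω), H ω) ∈ S} := measure_congr hevent
    _ = ∫⁻ ω, P {ω' | ∀ i : Fin d, H ω (x i)⁻¹ < E i ω'} ∂P :=
        hEH.measure_preimage_eq_lintegral (measurable_pi_lambda _ hEmeas) hHmeas hS
    _ = ∫⁻ ω, ENNReal.ofReal (Real.exp (-∑ i, (fun _ => 1) i * H ω (x i)⁻¹)) ∂P :=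
        lintegral_congr fun ω => by
          simpa only [one_mul] using measure_forall_lt_of_iIndepFun_exp hEindep hEexp (hHnn ω)
    _ = _ := by
        rw [hLaplace d _ _ (fun _ => zero_le_one) hxinv]
        simp only [one_mul, one_div, ← Finset.sum_neg_distrib, Real.exp_sum]

theorem stmt12 {Ω : Type*} [MeasurableSpace Ω] (P : Measure Ω)
    [IsProbabilityMeasure P] (H : Ω → ℝ → ℝ) (hHmeas : Measurable H)
    (hH0 : ∀ ω, H ω 0 = 0) (hHmono : ∀ ω, Monotone (H ω))
    (hHnn : ∀ ω t, 0 ≤ t → 0 ≤ H ω t)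
    (hHrc : ∀ ω t, ContinuousWithinAt (H ω) (Set.Ici t) t)
    -- the Lévy measure ν on the space M of non-zero nnnd paths vanishing at 0
    (ν : Measure (ℝ → ℝ))
    (hνsupp : ν {g | ¬ (g 0 = 0 ∧ Monotone g ∧ (∀ t, 0 ≤ g t) ∧ g ≠ 0)} = 0)
    (hνint : ∀ t : ℝ, 0 ≤ t →
      (∫⁻ g, ENNReal.ofReal (min 1 (g t)) ∂ν) < ⊤)
    -- H is infinitely divisible with Lévy measure ν and zero drift
    (hLaplace : ∀ (n : ℕ) (a t : Fin n → ℝ), (∀ i, 0 ≤ a i) → (∀ i, 0 ≤ t i) →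
      ∫⁻ ω, ENNReal.ofReal (Real.exp (-(∑ i, a i * H ω (t i)))) ∂P =
        ENNReal.ofReal (Real.exp
          (-(∫⁻ g, ENNReal.ofReal
              (1 - Real.exp (-(∑ i, a i * g (t i)))) ∂ν).toReal)))
    (E : ℕ → Ω → ℝ) (hEmeas : ∀ i, Measurable (E i))
    (hEindep : iIndepFun E P)
    (hEexp : ∀ (i : ℕ) (t : ℝ),
      P {ω | t < E i ω} = ENNReal.ofReal (Real.exp (-(max t 0))))
    (hEH : IndepFun (fun ω (i : ℕ) => E i ω) H P)
    (Y X : ℕ → Ω → ℝ)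
    (hY : ∀ i ω, Y i ω = sInf {t | 0 ≤ t ∧ E i ω ≤ H ω t})
    (hX : ∀ i ω, X i ω = (Y i ω)⁻¹) :
    ∀ (d : ℕ) (x : Fin d → ℝ), (∀ i, 0 < x i) →
      P {ω | ∀ i : Fin d, X i ω < x i} =
        ENNReal.ofReal (Real.exp
          (-(∫⁻ g, ENNReal.ofReal
              (1 - ∏ i : Fin d, Real.exp (-g (1 / x i))) ∂ν).toReal)) :=
  stmt12_general P H hHmeas hH0 hHmono hHrc ν hLaplace E hEmeas hEindep hEexp hEH Y X hY hX
end
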